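/- arXiv:1906.09389 — 10 statements merged into one kernel-verified Lean document; each statement's English description precedes it below -/
import Mathlib

section
/- Let κ ∈ (-1,1) and α ∈ (-π/2, π/2). Set T(z) = (1 - e^{iα} z)/(1 + κ e^{iα} z) and z* = 2cos(α)/(1-κ). Then the denominator 1 + κ e^{iα} z* is nonzero and T(z*) = -e^{2i𝔰_κ(α)}, i.e. T(z*) = exp(i(π + 2 arctan(((1-κ)/(1+κ)) tan α))). -/
open Real Complex

/-!
With `u = e^{iα}` one has `u · 2cos α = u² + 1`, so `T(z*) = -(u² + κ)/(1 + κu²)`.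
Factoring out `u` gives `u² + κ = u q` and `1 + κu² = u q̄` with
`q = (1+κ)cos α + i(1-κ)sin α`. Since `Re q ≠ 0`, `q/q̄ = (1 + it)/(1 - it) = e^{2i arctan t}`
for `t = Im q / Re q = ((1-κ)/(1+κ)) tan α`, the last equality being the definition of the
complex arctangent.
-/

lemma exp_two_mul_arctan_mul_I (t : ℝ) :
    exp (2 * Real.arctan t * I) = (1 + t * I) / (1 - t * I) := by
  have hI : ∀ s : ℝ, 1 + s * I ≠ 0 := fun s h => by simpa using congrArg re h
  have hsub : 1 - t * I ≠ 0 := by simpa [sub_eq_add_neg] using hI (-t)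
  rw [ofReal_arctan, Complex.arctan, show 2 * (-I / 2 * log ((1 + t * I) / (1 - t * I))) * I
      = -(I * I) * log ((1 + t * I) / (1 - t * I)) by ring, I_mul_I, neg_neg, one_mul,
    exp_log (div_ne_zero (hI t) hsub)]

lemma add_mul_I_div_sub_mul_I (a b : ℝ) (ha : a ≠ 0) :
    (a + b * I) / (a - b * I) = exp (2 * Real.arctan (b / a) * I) := by
  rw [exp_two_mul_arctan_mul_I, ← mul_div_mul_left _ (1 - _) (ofReal_ne_zero.2 ha)]
  push_cast
  rw [mul_add, mul_sub, mul_one, ← mul_assoc, mul_div_cancel₀ _ (ofReal_ne_zero.2 ha)]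

lemma exp_mul_I_mul_two_cos (x : ℂ) : exp (x * I) * (2 * cos x) = exp (x * I) ^ 2 + 1 := by
  rw [two_cos, mul_add, neg_mul, ← Complex.exp_add (x * I) (-(x * I)), add_neg_cancel,
    Complex.exp_zero, sq]

lemma exp_mul_I_sq_add (κ x : ℂ) :
    exp (x * I) ^ 2 + κ = exp (x * I) * ((1 + κ) * cos x + (1 - κ) * sin x * I) := by
  have h := exp_ne_zero (x * I)
  rw [Complex.cos, Complex.sin, neg_mul, Complex.exp_neg]
  field_simp
  linear_combination (exp (x * I) ^ 2 - 1) * (1 - κ) * I_sq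

lemma one_add_mul_exp_mul_I_sq (κ x : ℂ) :
    1 + κ * exp (x * I) ^ 2 = exp (x * I) * ((1 + κ) * cos x - (1 - κ) * sin x * I) := by
  have h := exp_ne_zero (x * I)
  rw [Complex.cos, Complex.sin, neg_mul, Complex.exp_neg]
  field_simp
  linear_combination (exp (x * I) ^ 2 - 1) * (κ - 1) * I_sq

lemma one_sub_exp_mul_I_mul_two_cos_div {κ : ℂ} (hκ : 1 - κ ≠ 0) (x : ℂ) :
    1 - exp (x * I) * (2 * cos x / (1 - κ)) =
      -(exp (x * I) * ((1 + κ) * cos x + (1 - κ) * sin x * I)) / (1 - κ) := by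
  rw [← exp_mul_I_sq_add, eq_div_iff hκ, mul_div_assoc', exp_mul_I_mul_two_cos]
  field_simp
  ring

lemma one_add_mul_exp_mul_I_mul_two_cos_div {κ : ℂ} (hκ : 1 - κ ≠ 0) (x : ℂ) :
    1 + κ * exp (x * I) * (2 * cos x / (1 - κ)) =
      exp (x * I) * ((1 + κ) * cos x - (1 - κ) * sin x * I) / (1 - κ) := by
  rw [← one_add_mul_exp_mul_I_sq, eq_div_iff hκ, mul_assoc, mul_div_assoc',
    exp_mul_I_mul_two_cos]
  field_simp
  ring

/-- For `κ ∈ (-1,1)` and `α ∈ (-π/2,π/2)`, with `T(z) = (1 - e^{iα}z)/(1 + κ e^{iα}z)` and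
`z* = 2cos(α)/(1-κ)`, the denominator `1 + κ e^{iα} z*` is nonzero and
`T(z*) = exp(i(π + 2 arctan(((1-κ)/(1+κ)) tan α)))`, i.e. `T(z*) = -e^{2i𝔰_κ(α)}`. -/
theorem geodesic_exit_point (κ : ℝ) (hκ : κ ∈ Set.Ioo (-1 : ℝ) 1)
    (α : ℝ) (hα : α ∈ Set.Ioo (-(π / 2)) (π / 2)) :
    1 + (κ : ℂ) * Complex.exp (Complex.I * α) * ((2 * Real.cos α / (1 - κ) : ℝ) : ℂ) ≠ 0 ∧
    (1 - Complex.exp (Complex.I * α) * ((2 * Real.cos α / (1 - κ) : ℝ) : ℂ)) /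
        (1 + κ * Complex.exp (Complex.I * α) * ((2 * Real.cos α / (1 - κ) : ℝ) : ℂ)) =
      Complex.exp (Complex.I *
        ((π + 2 * Real.arctan ((1 - κ) / (1 + κ) * Real.tan α) : ℝ) : ℂ)) := by
  obtain ⟨hκ₁, hκ₂⟩ := hκ
  have hsub : (1 : ℂ) - κ ≠ 0 := by exact_mod_cast (by linarith : (1 : ℝ) - κ ≠ 0)
  have ha : (1 + κ) * Real.cos α ≠ 0 := mul_ne_zero (by linarith) (cos_pos_of_mem_Ioo hα).ne'
  have hz : ((2 * Real.cos α / (1 - κ) : ℝ) : ℂ) = 2 * Complex.cos α / (1 - κ) := by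
    push_cast; rfl
  have hre : (1 + κ) * Complex.cos α = ((1 + κ) * Real.cos α : ℝ) := by push_cast; rfl
  have him : (1 - κ) * Complex.sin α = ((1 - κ) * Real.sin α : ℝ) := by push_cast; rfl
  rw [mul_comm I, hz, one_add_mul_exp_mul_I_mul_two_cos_div hsub,
    one_sub_exp_mul_I_mul_two_cos_div hsub, hre, him, Real.tan_eq_sin_div_cos, div_mul_div_comm]
  generalize (1 + κ) * Real.cos α = a at *
  generalize (1 - κ) * Real.sin α = b
  have hconj : (a : ℂ) - b * I ≠ 0 := fun h => ha (by simpa using congrArg re h)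
  refine ⟨div_ne_zero (mul_ne_zero (Complex.exp_ne_zero _) hconj) hsub, ?_⟩
  rw [div_div_div_cancel_right₀ hsub, neg_div, mul_div_mul_left _ _ (Complex.exp_ne_zero _),
    add_mul_I_div_sub_mul_I a b ha, ofReal_add, mul_add, Complex.exp_add, mul_comm I π,
    exp_pi_mul_I, neg_one_mul, mul_comm I, ofReal_mul, ofReal_ofNat]
end

section
/- For every κ ∈ (-1,1) and every α ∈ (-π/2, π/2), one has e^{2i𝔰_κ(α)} = (e^{2iα} + κ)/(1 + κ e^{2iα}); in particular the denominator 1 + κ e^{2iα} is nonzero. -/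
/-!
Writing `t = tan α`, the Cayley transform gives `e^{2iα} = (1 + it)/(1 - it)`, and likewise
`e^{2i𝔰_κ(α)} = (1 + iλt)/(1 - iλt)` with `λ = (1-κ)/(1+κ)`. The Möbius map `z ↦ (z+κ)/(1+κz)`
conjugates to multiplication of `t` by `λ` under the Cayley transform, which is exactly the claimed formula.
The denominator does not vanish because `|κ e^{2iα}| = |κ| < 1`.
-/

open Real Complex

/-- The scattering signature `𝔰_κ(α) = arctan(((1-κ)/(1+κ)) tan α)`. -/
noncomputable def scatSig (κ α : ℝ) : ℝ := Real.arctan ((1 - κ) / (1 + κ) * Real.tan α)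

lemma one_add_ne_zero_of_norm_lt_one {R : Type*} [SeminormedRing R] [NormOneClass R] {a : R}
    (ha : ‖a‖ < 1) : 1 + a ≠ 0 := by
  intro h
  rw [eq_neg_of_add_eq_zero_right h, norm_neg, norm_one] at ha
  exact lt_irrefl _ ha

lemma one_sub_I_mul_ofReal_ne_zero (x : ℝ) : 1 - I * x ≠ 0 := by
  intro h
  simpa using congrArg Complex.re h

lemma exp_two_mul_I_mul_eq_cayley {θ : ℝ} (hθ : Real.cos θ ≠ 0) :
    exp (2 * I * θ) = (1 + I * Real.tan θ) / (1 - I * Real.tan θ) := by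
  have hc : Complex.cos θ ≠ 0 := mod_cast hθ
  rw [eq_div_iff (one_sub_I_mul_ofReal_ne_zero _), ofReal_tan, Complex.tan,
    show 2 * I * θ = θ * I + θ * I by ring, Complex.exp_add, Complex.exp_mul_I]
  field_simp
  linear_combination (Complex.cos θ + I * Complex.sin θ) * Complex.cos_sq_add_sin_sq (θ : ℂ)
    - (Complex.cos θ * Complex.sin θ ^ 2 + I * Complex.sin θ ^ 3) * I_sq

lemma cayley_mul_eq_mobius_cayley {k t : ℂ} (hk : 1 + k ≠ 0) (ht : 1 - I * t ≠ 0)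
    (hden : 1 + k * ((1 + I * t) / (1 - I * t)) ≠ 0) :
    (1 + I * ((1 - k) / (1 + k) * t)) / (1 - I * ((1 - k) / (1 + k) * t)) =
      ((1 + I * t) / (1 - I * t) + k) / (1 + k * ((1 + I * t) / (1 - I * t))) := by
  have hden' : (1 + k) * (1 - I * ((1 - k) / (1 + k) * t)) =
      (1 - I * t) * (1 + k * ((1 + I * t) / (1 - I * t))) := by
    field_simp
    ring
  have hscaled : 1 - I * ((1 - k) / (1 + k) * t) ≠ 0 :=
    right_ne_zero_of_mul (hden' ▸ mul_ne_zero ht hden)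
  rw [div_eq_div_iff hscaled hden]
  field_simp
  ring

/-- For `κ ∈ (-1,1)` and `α ∈ (-π/2,π/2)`,
`e^{2i𝔰_κ(α)} = (e^{2iα} + κ)/(1 + κ e^{2iα})`, the denominator being nonzero. -/
theorem exp_two_I_scatSig (κ : ℝ) (hκ : κ ∈ Set.Ioo (-1 : ℝ) 1)
    (α : ℝ) (hα : α ∈ Set.Ioo (-(π / 2)) (π / 2)) :
    (1 + (κ : ℂ) * Complex.exp (2 * Complex.I * α)) ≠ 0 ∧
    Complex.exp (2 * Complex.I * (scatSig κ α : ℝ)) =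
      (Complex.exp (2 * Complex.I * α) + κ) / (1 + κ * Complex.exp (2 * Complex.I * α)) := by
  have hden : 1 + (κ : ℂ) * exp (2 * I * α) ≠ 0 := by
    refine one_add_ne_zero_of_norm_lt_one ?_
    rw [norm_mul, Complex.norm_exp, norm_real, Real.norm_eq_abs]
    simpa using abs_lt.mpr hκ
  refine ⟨hden, ?_⟩
  have hk : (1 + κ : ℂ) ≠ 0 := mod_cast (by linarith [hκ.1] : (1 + κ : ℝ) ≠ 0)
  have hcα := (cos_pos_of_mem_Ioo hα).ne'
  rw [exp_two_mul_I_mul_eq_cayley hcα] at hden ⊢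
  rw [scatSig, exp_two_mul_I_mul_eq_cayley (cos_arctan_pos _).ne', Real.tan_arctan]
  simp only [ofReal_mul, ofReal_div, ofReal_sub, ofReal_add, ofReal_one]
  exact cayley_mul_eq_mobius_cayley hk (one_sub_I_mul_ofReal_ne_zero _) hden
end

section
/- Let κ ∈ (-1,1) with κ ≠ 0 and α ∈ (-π/2, π/2). Then the series Σ_{p=1}^∞ (-κ)^p e^{2ipα} converges absolutely and e^{2i𝔰_κ(α)} = κ + (κ - κ^{-1}) Σ_{p=1}^∞ (-κ)^p e^{2ipα}. -/
open Real Complex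

/-!
With `z = e^{2iα}` the series is geometric with ratio `-κz`, `|κz| < 1`, so the right-hand side
is `κ - (κ - κ⁻¹) κz / (1 + κz) = (κ + z) / (1 + κz)`. On the other side `e^{2iθ}` is the Cayley
transform `(1 + i tan θ) / (1 - i tan θ)`, and multiplying `tan α` by `(1 - κ) / (1 + κ)` acts on
the Cayley transform as the Möbius map `z ↦ (κ + z) / (1 + κz)`.
-/

namespace Complex

theorem exp_two_mul_I_eq_cayley_tan {x : ℂ} (hx : cos x ≠ 0) :
    exp (2 * I * x) = (1 + tan x * I) / (1 - tan x * I) := by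
  have hexp : exp (-x * I) ≠ 0 := exp_ne_zero _
  rw [tan_eq_sin_div_cos, div_mul_eq_mul_div, one_add_div hx, one_sub_div hx,
    div_div_div_cancel_right₀ hx, cos_add_sin_I, cos_sub_sin_I, eq_div_iff hexp, ← exp_add]
  ring_nf

theorem exp_two_mul_I_arctan (u : ℝ) :
    exp (2 * I * Real.arctan u) = (1 + u * I) / (1 - u * I) := by
  have hcos : cos (Real.arctan u : ℂ) ≠ 0 := by
    exact_mod_cast (Real.cos_arctan_pos u).ne'
  rw [exp_two_mul_I_eq_cayley_tan hcos, ← ofReal_tan, Real.tan_arctan]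

theorem one_sub_ofReal_mul_I_ne_zero (x : ℝ) : (1 : ℂ) - x * I ≠ 0 := by
  intro h
  simpa using congrArg re h

end Complex

theorem cayley_scale_eq_mobius_cayley {κ T : ℝ} (hκ : κ ≠ -1) :
    ((1 : ℂ) + ((1 - κ) / (1 + κ) * T : ℝ) * I) / (1 - ((1 - κ) / (1 + κ) * T : ℝ) * I) =
      (κ + (1 + T * I) / (1 - T * I)) / (1 + κ * ((1 + T * I) / (1 - T * I))) := by
  have h1κ : (1 : ℂ) + κ ≠ 0 := by
    exact_mod_cast (show (1 : ℝ) + κ ≠ 0 by contrapose! hκ; linarith)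
  have hT := one_sub_ofReal_mul_I_ne_zero T
  set t : ℝ := (1 - κ) / (1 + κ) * T with ht
  have hnum : κ + (1 + T * I) / (1 - T * I) = (1 + κ) * (1 + t * I) / (1 - T * I) := by
    rw [ht]; push_cast; field_simp; ring
  have hden : 1 + κ * ((1 + T * I) / (1 - T * I)) = (1 + κ) * (1 - t * I) / (1 - T * I) := by
    rw [ht]; push_cast; field_simp; ring
  rw [hnum, hden, div_div_div_cancel_right₀ hT, mul_div_mul_left _ _ h1κ]

theorem exp_two_mul_I_scatSig {κ α : ℝ} (hκ : κ ≠ -1) (hα : Real.cos α ≠ 0) :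
    exp (2 * I * scatSig κ α) =
      (κ + exp (2 * I * α)) / (1 + κ * exp (2 * I * α)) := by
  have hα' : cos (α : ℂ) ≠ 0 := by exact_mod_cast hα
  rw [scatSig, exp_two_mul_I_arctan, exp_two_mul_I_eq_cayley_tan hα', ← ofReal_tan]
  exact cayley_scale_eq_mobius_cayley hκ

theorem hasSum_pow_succ_of_norm_lt_one {K : Type*} [NormedDivisionRing K] {q : K}
    (hq : ‖q‖ < 1) : HasSum (fun n : ℕ ↦ q ^ (n + 1)) (q * (1 - q)⁻¹) := by
  simpa only [pow_succ'] using (hasSum_geometric_of_norm_lt_one hq).mul_left q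

theorem add_sub_inv_mul_geom_sum_eq_mobius {K : Type*} [Field K] {κ z : K} (hκ : κ ≠ 0) (hz : 1 + κ * z ≠ 0) :
    κ + (κ - κ⁻¹) * (-κ * z * (1 - -κ * z)⁻¹) = (κ + z) / (1 + κ * z) := by
  rw [neg_mul, sub_neg_eq_add]
  field_simp
  ring

/-- For `κ ∈ (-1,1)`, `κ ≠ 0`, and `α ∈ (-π/2,π/2)`, the series
`Σ_{p=1}^∞ (-κ)^p e^{2ipα}` converges absolutely, and
`e^{2i𝔰_κ(α)} = κ + (κ - κ⁻¹) Σ_{p=1}^∞ (-κ)^p e^{2ipα}`. -/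
theorem geometric_series_scatSig (κ : ℝ) (hκ : κ ∈ Set.Ioo (-1 : ℝ) 1) (hκ0 : κ ≠ 0)
    (α : ℝ) (hα : α ∈ Set.Ioo (-(π / 2)) (π / 2)) :
    Summable (fun p : ℕ =>
      ‖((-κ : ℂ)) ^ (p + 1) * Complex.exp (2 * Complex.I * (p + 1) * α)‖) ∧
    Complex.exp (2 * Complex.I * (scatSig κ α : ℝ)) =
      κ + ((κ : ℂ) - (κ : ℂ)⁻¹) *
        ∑' p : ℕ, ((-κ : ℂ)) ^ (p + 1) * Complex.exp (2 * Complex.I * (p + 1) * α) := by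
  set z := exp (2 * I * α)
  have hz : ‖z‖ = 1 := by simp [z, norm_exp]
  have hq : ‖-(κ : ℂ) * z‖ < 1 := by
    rw [norm_mul, hz, mul_one, norm_neg, norm_real, Real.norm_eq_abs]
    exact abs_lt.2 hκ
  have hterm (p : ℕ) : (-κ : ℂ) ^ (p + 1) * exp (2 * I * (p + 1) * α) = (-κ * z) ^ (p + 1) := by
    rw [mul_pow, ← Complex.exp_nat_mul]
    push_cast
    ring_nf
  have hκz : 1 + (κ : ℂ) * z ≠ 0 := by
    rw [← sub_neg_eq_add, ← neg_mul]
    exact (isUnit_one_sub_of_norm_lt_one hq).ne_zero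
  simp only [hterm]
  refine ⟨(summable_nat_add_iff 1).2 (summable_norm_geometric_of_norm_lt_one hq), ?_⟩
  rw [(hasSum_pow_succ_of_norm_lt_one hq).tsum_eq,
    exp_two_mul_I_scatSig hκ.1.ne' (Real.cos_pos_of_mem_Ioo hα).ne',
    add_sub_inv_mul_geom_sum_eq_mobius (ofReal_ne_zero.2 hκ0) hκz]
end

section
/- Let κ ∈ (-1,1), ρ ∈ [0,1), θ ∈ ℝ. Set S = -2(1+κ)ρcos(θ)/(1-κ²ρ²), P = (ρ²-1)/(1-κ²ρ²), and T(x) = (e^{iθ}x + ρ)/(1 - κe^{iθ}ρx). If x₊, x₋ ∈ ℂ satisfy x₊ + x₋ = S and x₊·x₋ = P, and the denominators 1 - κe^{iθ}ρx₊ and 1 - κe^{iθ}ρx₋ are nonzero, then T(x₊)·T(x₋) = -e^{2iθ}·(1 + κρ²e^{-2iθ})/(1 + κρ²e^{2iθ}). -/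
open Complex

/-!
Write `e = e^{iθ}` and `D = 1 - κ²ρ²`. Expanding `T(x₊)T(x₋)` and clearing `D` with Vieta's
formulas, and using `2 cos θ · e = e² + 1`, both the numerator and the denominator become
divisible by `1 + κρ²`:
`D · (e x₊ + ρ)(e x₋ + ρ) = -(e² + κρ²)(1 + κρ²)` and
`D · (1 - κeρx₊)(1 - κeρx₋) = (1 + κρ²)(1 + κρ²e²)`.
The common factor cancels, and the second identity shows that `1 + κρ²e² ≠ 0` is forced by the
nonvanishing of the two denominators.
-/

section VietaProducts

variable {K : Type*} [Field K] {κ ρ e c x y : K}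

theorem mul_add_mul_add_eq_of_vieta (hD : 1 - κ ^ 2 * ρ ^ 2 ≠ 0) (hc : 2 * c * e = e ^ 2 + 1)
    (hsum : x + y = -2 * (1 + κ) * ρ * c / (1 - κ ^ 2 * ρ ^ 2))
    (hprod : x * y = (ρ ^ 2 - 1) / (1 - κ ^ 2 * ρ ^ 2)) :
    (e * x + ρ) * (e * y + ρ) = -(e ^ 2 + κ * ρ ^ 2) * (1 + κ * ρ ^ 2) / (1 - κ ^ 2 * ρ ^ 2) := by
  rw [eq_div_iff hD] at hsum hprod ⊢
  linear_combination e ^ 2 * hprod + e * ρ * hsum - (1 + κ) * ρ ^ 2 * hc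

theorem one_sub_mul_one_sub_eq_of_vieta (hD : 1 - κ ^ 2 * ρ ^ 2 ≠ 0)
    (hc : 2 * c * e = e ^ 2 + 1)
    (hsum : x + y = -2 * (1 + κ) * ρ * c / (1 - κ ^ 2 * ρ ^ 2))
    (hprod : x * y = (ρ ^ 2 - 1) / (1 - κ ^ 2 * ρ ^ 2)) :
    (1 - κ * e * ρ * x) * (1 - κ * e * ρ * y) =
      (1 + κ * ρ ^ 2) * (1 + κ * ρ ^ 2 * e ^ 2) / (1 - κ ^ 2 * ρ ^ 2) := by
  rw [eq_div_iff hD] at hsum hprod ⊢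
  linear_combination -κ * e * ρ * hsum + κ ^ 2 * e ^ 2 * ρ ^ 2 * hprod + κ * (1 + κ) * ρ ^ 2 * hc

theorem mobius_mul_mobius_eq_of_vieta (he : e ≠ 0) (hκρ : 1 + κ * ρ ^ 2 ≠ 0)
    (hD : 1 - κ ^ 2 * ρ ^ 2 ≠ 0) (hc : 2 * c * e = e ^ 2 + 1)
    (hsum : x + y = -2 * (1 + κ) * ρ * c / (1 - κ ^ 2 * ρ ^ 2))
    (hprod : x * y = (ρ ^ 2 - 1) / (1 - κ ^ 2 * ρ ^ 2))
    (hdx : 1 - κ * e * ρ * x ≠ 0) (hdy : 1 - κ * e * ρ * y ≠ 0) :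
    (e * x + ρ) / (1 - κ * e * ρ * x) * ((e * y + ρ) / (1 - κ * e * ρ * y)) =
      -e ^ 2 * (1 + κ * ρ ^ 2 * (e ^ 2)⁻¹) / (1 + κ * ρ ^ 2 * e ^ 2) := by
  have hden := mul_ne_zero hdx hdy
  rw [one_sub_mul_one_sub_eq_of_vieta hD hc hsum hprod] at hden
  have hR : 1 + κ * ρ ^ 2 * e ^ 2 ≠ 0 := right_ne_zero_of_mul (div_ne_zero_iff.mp hden).1
  rw [div_mul_div_comm, mul_add_mul_add_eq_of_vieta hD hc hsum hprod,
    one_sub_mul_one_sub_eq_of_vieta hD hc hsum hprod]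
  field_simp

end VietaProducts

theorem Complex.two_mul_cos_mul_exp_mul_I (θ : ℝ) :
    2 * Complex.cos θ * Complex.exp (θ * I) = Complex.exp (θ * I) ^ 2 + 1 := by
  rw [Complex.exp_mul_I]
  linear_combination Complex.sin_sq_add_cos_sq (θ : ℂ) - Complex.sin θ ^ 2 * I_sq

/-- Let `κ ∈ (-1,1)`, `ρ ∈ [0,1)`, `θ ∈ ℝ`, and `T(x) = (e^{iθ}x + ρ)/(1 - κe^{iθ}ρx)`.
If `x₊ + x₋ = S = -2(1+κ)ρcos(θ)/(1-κ²ρ²)` and `x₊·x₋ = P = (ρ²-1)/(1-κ²ρ²)`, with both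
denominators `1 - κe^{iθ}ρx₊` and `1 - κe^{iθ}ρx₋` nonzero, then
`T(x₊)·T(x₋) = -e^{2iθ}(1 + κρ²e^{-2iθ})/(1 + κρ²e^{2iθ})`. -/
theorem scattering_product (κ : ℝ) (hκ : κ ∈ Set.Ioo (-1 : ℝ) 1)
    (ρ : ℝ) (hρ : ρ ∈ Set.Ico (0 : ℝ) 1) (θ : ℝ) (xp xm : ℂ)
    (hsum : xp + xm = ((-2 * (1 + κ) * ρ * Real.cos θ / (1 - κ ^ 2 * ρ ^ 2) : ℝ) : ℂ))
    (hprod : xp * xm = (((ρ ^ 2 - 1) / (1 - κ ^ 2 * ρ ^ 2) : ℝ) : ℂ))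
    (hdp : 1 - (κ : ℂ) * Complex.exp (Complex.I * θ) * ρ * xp ≠ 0)
    (hdm : 1 - (κ : ℂ) * Complex.exp (Complex.I * θ) * ρ * xm ≠ 0) :
    ((Complex.exp (Complex.I * θ) * xp + ρ) / (1 - κ * Complex.exp (Complex.I * θ) * ρ * xp)) *
      ((Complex.exp (Complex.I * θ) * xm + ρ) / (1 - κ * Complex.exp (Complex.I * θ) * ρ * xm)) =
      -Complex.exp (2 * Complex.I * θ) *
        (1 + κ * ρ ^ 2 * Complex.exp (-(2 * Complex.I * θ))) /
        (1 + κ * ρ ^ 2 * Complex.exp (2 * Complex.I * θ)) := by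
  obtain ⟨hκ₁, hκ₂⟩ := hκ
  obtain ⟨hρ₀, hρ₁⟩ := hρ
  have hκρ : (1 + κ * ρ ^ 2 : ℝ) ≠ 0 := by nlinarith
  have hD : (1 - κ ^ 2 * ρ ^ 2 : ℝ) ≠ 0 := by
    have hκsq : κ ^ 2 < 1 := by nlinarith
    have hρsq : ρ ^ 2 < 1 := by nlinarith
    nlinarith [mul_nonneg (sq_nonneg κ) (sub_nonneg.mpr hρsq.le)]
  have hexp2 : Complex.exp (2 * I * θ) = Complex.exp (I * θ) ^ 2 := by
    rw [← Complex.exp_nat_mul]; ring_nf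
  have hc := Complex.two_mul_cos_mul_exp_mul_I θ
  rw [mul_comm (θ : ℂ)] at hc
  push_cast at hsum hprod
  rw [Complex.exp_neg, hexp2]
  exact mobius_mul_mobius_eq_of_vieta (Complex.exp_ne_zero _) (by exact_mod_cast hκρ)
    (by exact_mod_cast hD) hc hsum hprod hdp hdm
end

section
/- For every κ ∈ (-1,1) and α ∈ (-π/2, π/2), the complex number (1/√(1-κ²))·e^{iα}·(e^{-i𝔰_κ(α)} - κe^{i𝔰_κ(α)}) is real and positive, and it equals √(𝔰_κ'(α)), where 𝔰_κ'(α) = (1-κ²)/(1 + κ² + 2κ cos(2α)). -/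
open Real Complex

/-- The derivative `𝔰_κ'(α) = (1-κ²)/(1 + κ² + 2κ cos(2α))`. -/
noncomputable def scatSig' (κ α : ℝ) : ℝ := (1 - κ ^ 2) / (1 + κ ^ 2 + 2 * κ * Real.cos (2 * α))

/-!
Write `β = 𝔰_κ(α)`. The relation `tan β = ((1-κ)/(1+κ)) tan α` is, cross-multiplied,
`(1+κ) sin β cos α = (1-κ) sin α cos β`, which is exactly the vanishing of the imaginary part of
`e^{iα}(e^{-iβ} - κ e^{iβ})`; the real part then collapses to `(1-κ) cos β / cos α > 0`.
Squaring, `cos² β = 1 / (1 + tan² β)` and `(1+κ)² cos² α + (1-κ)² sin² α = 1 + κ² + 2κ cos 2α`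
turn the square of the number into `𝔰_κ'(α)`.
-/

lemma add_sq_mul_cos_sq_add_sub_sq_mul_sin_sq (κ α : ℝ) :
    (1 + κ) ^ 2 * Real.cos α ^ 2 + (1 - κ) ^ 2 * Real.sin α ^ 2 =
      1 + κ ^ 2 + 2 * κ * Real.cos (2 * α) := by
  rw [Real.cos_two_mul, Real.sin_sq]
  ring

lemma cexp_I_mul_mul_sub_mul_cexp (κ α β : ℝ) :
    Complex.exp (Complex.I * α) *
        (Complex.exp (-Complex.I * β) - κ * Complex.exp (Complex.I * β)) =
      (((1 - κ) * Real.cos α * Real.cos β + (1 + κ) * Real.sin α * Real.sin β : ℝ) : ℂ) +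
        (((1 - κ) * Real.sin α * Real.cos β - (1 + κ) * Real.cos α * Real.sin β : ℝ) : ℂ) *
          Complex.I := by
  have h (θ : ℝ) : Complex.exp (Complex.I * θ) = Real.cos θ + Real.sin θ * Complex.I := by
    rw [mul_comm, Complex.exp_mul_I, Complex.ofReal_cos, Complex.ofReal_sin]
  have hneg : -Complex.I * β = Complex.I * ((-β : ℝ) : ℂ) := by push_cast; ring
  rw [hneg, h, h, h, Real.cos_neg, Real.sin_neg]
  simp only [Complex.ofReal_add, Complex.ofReal_sub, Complex.ofReal_mul, Complex.ofReal_neg,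
    Complex.ofReal_one]
  linear_combination -(1 + κ) * (Real.sin α : ℂ) * Real.sin β * Complex.I_sq

section scatSig

variable {κ α : ℝ}

lemma cos_scatSig_pos : 0 < Real.cos (scatSig κ α) := Real.cos_arctan_pos _

lemma one_add_mul_sin_scatSig_mul_cos (hκ : 1 + κ ≠ 0) (hα : Real.cos α ≠ 0) :
    (1 + κ) * Real.sin (scatSig κ α) * Real.cos α =
      (1 - κ) * Real.sin α * Real.cos (scatSig κ α) := by
  have htan : Real.tan (scatSig κ α) = (1 - κ) / (1 + κ) * Real.tan α := Real.tan_arctan _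
  have hcos : Real.cos (scatSig κ α) ≠ 0 := cos_scatSig_pos.ne'
  rw [Real.tan_eq_sin_div_cos, Real.tan_eq_sin_div_cos] at htan
  field_simp at htan
  linear_combination htan

lemma cos_scatSig_sq (hκ : 1 + κ ≠ 0) (hα : Real.cos α ≠ 0) :
    Real.cos (scatSig κ α) ^ 2 =
      (1 + κ) ^ 2 * Real.cos α ^ 2 / (1 + κ ^ 2 + 2 * κ * Real.cos (2 * α)) := by
  rw [scatSig, Real.cos_sq_arctan, ← add_sq_mul_cos_sq_add_sub_sq_mul_sin_sq,
    Real.tan_eq_sin_div_cos]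
  field_simp

lemma cexp_I_mul_mul_sub_mul_cexp_scatSig (hκ : 1 + κ ≠ 0) (hα : Real.cos α ≠ 0) :
    Complex.exp (Complex.I * α) *
        (Complex.exp (-Complex.I * (scatSig κ α : ℝ)) -
          κ * Complex.exp (Complex.I * (scatSig κ α : ℝ))) =
      (((1 - κ) * Real.cos (scatSig κ α) / Real.cos α : ℝ) : ℂ) := by
  have hcross := one_add_mul_sin_scatSig_mul_cos hκ hα
  have hre : (1 - κ) * Real.cos α * Real.cos (scatSig κ α) +
      (1 + κ) * Real.sin α * Real.sin (scatSig κ α) =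
        (1 - κ) * Real.cos (scatSig κ α) / Real.cos α := by
    field_simp
    linear_combination
      Real.sin α * hcross + (1 - κ) * Real.cos (scatSig κ α) * Real.sin_sq_add_cos_sq α
  have him : (1 - κ) * Real.sin α * Real.cos (scatSig κ α) -
      (1 + κ) * Real.cos α * Real.sin (scatSig κ α) = 0 := by
    linear_combination -hcross
  rw [cexp_I_mul_mul_sub_mul_cexp, hre, him, Complex.ofReal_zero, zero_mul, add_zero]

lemma scatSig'_eq_sq (hκ : κ ∈ Set.Ioo (-1 : ℝ) 1) (hα : Real.cos α ≠ 0) :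
    scatSig' κ α = ((1 - κ) * Real.cos (scatSig κ α) / (Real.cos α * √(1 - κ ^ 2))) ^ 2 := by
  obtain ⟨hκ₁, hκ₂⟩ := hκ
  have hD : 0 < 1 + κ ^ 2 + 2 * κ * Real.cos (2 * α) := by
    rw [← add_sq_mul_cos_sq_add_sub_sq_mul_sin_sq]
    have : 1 + κ ≠ 0 := by linarith
    positivity
  have hw : 0 < 1 - κ ^ 2 := by nlinarith
  rw [div_pow, mul_pow, mul_pow, Real.sq_sqrt hw.le, cos_scatSig_sq (by linarith) hα, scatSig']
  field_simp
  ring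

end scatSig

/-- For `κ ∈ (-1,1)` and `α ∈ (-π/2,π/2)`, the complex number
`(1/√(1-κ²)) e^{iα} (e^{-i𝔰_κ(α)} - κ e^{i𝔰_κ(α)})` is real, positive, and equals `√(𝔰_κ'(α))`. -/
theorem sqrt_scatSig'_formula (κ : ℝ) (hκ : κ ∈ Set.Ioo (-1 : ℝ) 1)
    (α : ℝ) (hα : α ∈ Set.Ioo (-(π / 2)) (π / 2)) :
    ((1 / Real.sqrt (1 - κ ^ 2) : ℝ) * Complex.exp (Complex.I * α) *
        (Complex.exp (-Complex.I * (scatSig κ α : ℝ)) -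
          κ * Complex.exp (Complex.I * (scatSig κ α : ℝ)))).im = 0 ∧
    0 < ((1 / Real.sqrt (1 - κ ^ 2) : ℝ) * Complex.exp (Complex.I * α) *
        (Complex.exp (-Complex.I * (scatSig κ α : ℝ)) -
          κ * Complex.exp (Complex.I * (scatSig κ α : ℝ)))).re ∧
    (1 / Real.sqrt (1 - κ ^ 2) : ℝ) * Complex.exp (Complex.I * α) *
        (Complex.exp (-Complex.I * (scatSig κ α : ℝ)) -
          κ * Complex.exp (Complex.I * (scatSig κ α : ℝ))) =
      (Real.sqrt (scatSig' κ α) : ℂ) := by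
  have hcos : 0 < Real.cos α := Real.cos_pos_of_mem_Ioo hα
  have hκ₁ : 0 < 1 + κ := by linarith [hκ.1]
  have hκ₂ : 0 < 1 - κ := by linarith [hκ.2]
  set r := (1 - κ) * Real.cos (scatSig κ α) / (Real.cos α * √(1 - κ ^ 2))
  have hz : (1 / Real.sqrt (1 - κ ^ 2) : ℝ) * Complex.exp (Complex.I * α) *
      (Complex.exp (-Complex.I * (scatSig κ α : ℝ)) -
        κ * Complex.exp (Complex.I * (scatSig κ α : ℝ))) = (r : ℂ) := by
    rw [mul_assoc, cexp_I_mul_mul_sub_mul_cexp_scatSig hκ₁.ne' hcos.ne', ← Complex.ofReal_mul]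
    congr 1
    ring
  have hr : 0 < r := by
    have := cos_scatSig_pos (κ := κ) (α := α)
    have : 0 < √(1 - κ ^ 2) := Real.sqrt_pos.2 (by nlinarith)
    positivity
  rw [hz, scatSig'_eq_sq hκ hcos.ne', Real.sqrt_sq hr.le]
  exact ⟨Complex.ofReal_im r, by simpa using hr, rfl⟩
end

section
/- For every κ ∈ (-1,1) and α ∈ (-π/2, π/2), one has √((1+κ)/(1-κ))·√(𝔰_κ'(α))·cos(α) = cos(𝔰_κ(α)) and √((1-κ)/(1+κ))·√(𝔰_κ'(α))·sin(α) = sin(𝔰_κ(α)), where 𝔰_κ'(α) = (1-κ²)/(1 + κ² + 2κ cos(2α)). -/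
open Real

/-!
With `a = (1+κ) cos α` and `b = (1-κ) sin α` one has `𝔰_κ(α) = arctan (b / a)` and
`1 + κ² + 2κ cos 2α = a² + b²`. For `a > 0` the angle `arctan (b / a)` is the argument of the
point `(a, b)`, so its cosine and sine are `a / √(a² + b²)` and `b / √(a² + b²)`, while
`√((1±κ)/(1∓κ)) · √𝔰_κ'(α) = (1±κ) / √(a² + b²)`.
-/

lemma Real.cos_arctan_div {a : ℝ} (ha : 0 < a) (b : ℝ) :
    cos (arctan (b / a)) = a / √(a ^ 2 + b ^ 2) := by
  have hsq : 1 + (b / a) ^ 2 = (a ^ 2 + b ^ 2) / a ^ 2 := by field_simp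
  rw [cos_arctan, hsq, sqrt_div' _ (sq_nonneg a), sqrt_sq ha.le, one_div_div]

lemma Real.sin_arctan_div {a : ℝ} (ha : 0 < a) (b : ℝ) :
    sin (arctan (b / a)) = b / √(a ^ 2 + b ^ 2) := by
  rw [← tan_mul_cos (cos_arctan_pos _).ne', tan_arctan, cos_arctan_div ha]
  field_simp

lemma scatSig_eq_arctan_div (κ α : ℝ) :
    scatSig κ α = arctan ((1 - κ) * sin α / ((1 + κ) * cos α)) := by
  rw [scatSig, tan_eq_sin_div_cos, div_mul_div_comm]

lemma one_add_sq_add_two_mul_cos_two_mul (κ α : ℝ) :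
    1 + κ ^ 2 + 2 * κ * cos (2 * α) = ((1 + κ) * cos α) ^ 2 + ((1 - κ) * sin α) ^ 2 := by
  rw [cos_two_mul]
  linear_combination -(1 - κ) ^ 2 * sin_sq_add_cos_sq α

lemma sqrt_div_mul_sqrt_mul_div {p q : ℝ} (hp : 0 ≤ p) (hq : 0 < q) (N : ℝ) :
    √(p / q) * √(p * q / N) = p / √N := by
  rw [← sqrt_mul (div_nonneg hp hq.le), show p / q * (p * q / N) = p ^ 2 / N by field_simp,
    sqrt_div (sq_nonneg p), sqrt_sq hp]

/-- For `κ ∈ (-1,1)` and `α ∈ (-π/2,π/2)`: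
`√((1+κ)/(1-κ)) √(𝔰_κ'(α)) cos α = cos(𝔰_κ(α))` and
`√((1-κ)/(1+κ)) √(𝔰_κ'(α)) sin α = sin(𝔰_κ(α))`. -/
theorem cos_sin_scatSig (κ : ℝ) (hκ : κ ∈ Set.Ioo (-1 : ℝ) 1)
    (α : ℝ) (hα : α ∈ Set.Ioo (-(π / 2)) (π / 2)) :
    Real.sqrt ((1 + κ) / (1 - κ)) * Real.sqrt (scatSig' κ α) * Real.cos α =
      Real.cos (scatSig κ α) ∧
    Real.sqrt ((1 - κ) / (1 + κ)) * Real.sqrt (scatSig' κ α) * Real.sin α =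
      Real.sin (scatSig κ α) := by
  obtain ⟨hκ₁, hκ₂⟩ := hκ
  have ha : 0 < (1 + κ) * cos α := mul_pos (by linarith) (cos_pos_of_mem_Ioo hα)
  rw [scatSig_eq_arctan_div, cos_arctan_div ha, sin_arctan_div ha, scatSig',
    one_add_sq_add_two_mul_cos_two_mul]
  constructor
  · rw [show 1 - κ ^ 2 = (1 + κ) * (1 - κ) by ring,
      sqrt_div_mul_sqrt_mul_div (by linarith) (by linarith)]
    ring
  · rw [show 1 - κ ^ 2 = (1 - κ) * (1 + κ) by ring,
      sqrt_div_mul_sqrt_mul_div (by linarith) (by linarith)]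
    ring
end

section
/- Let κ ∈ (-1,1). For integers n ≥ 0 and k ∈ ℤ, define on [0,2π]×[-π/2,π/2] the function ψ^κ_{n,k}(β,α) = ((-1)^n/(4π))·√(𝔰_κ'(α))·e^{i(n-2k)(β+𝔰_κ(α))}·(e^{i(n+1)𝔰_κ(α)} + (-1)^n e^{-i(n+1)𝔰_κ(α)}), where 𝔰_κ(α) = arctan(((1-κ)/(1+κ)) tan α) and 𝔰_κ'(α) = (1-κ²)/(1+κ²+2κcos(2α)). Then for all integers n, n' ≥ 0 and k, k' ∈ ℤ, the weighted inner product (1/(1+κ))·∫₀^{2π}∫_{-π/2}^{π/2} ψ^κ_{n,k}(β,α)·conj(ψ^κ_{n',k'}(β,α)) dα dβ equals 1/(4(1+κ)) if (n,k) = (n',k') and equals 0 otherwise. -/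
open Real Complex intervalIntegral

/-- The boundary functions
`ψ^κ_{n,k}(β,α) = ((-1)^n/(4π)) √(𝔰_κ'(α)) e^{i(n-2k)(β+𝔰_κ(α))}
  (e^{i(n+1)𝔰_κ(α)} + (-1)^n e^{-i(n+1)𝔰_κ(α)})`. -/
noncomputable def psi (κ : ℝ) (n : ℕ) (k : ℤ) (β α : ℝ) : ℂ :=
  ((-1 : ℂ) ^ n / (4 * π)) * (Real.sqrt (scatSig' κ α) : ℂ) *
    Complex.exp (Complex.I * ((n : ℂ) - 2 * k) * ((β : ℂ) + (scatSig κ α : ℝ))) *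
    (Complex.exp (Complex.I * ((n : ℂ) + 1) * (scatSig κ α : ℝ)) +
      (-1 : ℂ) ^ n * Complex.exp (-Complex.I * ((n : ℂ) + 1) * (scatSig κ α : ℝ)))

/-! The substitution `s = 𝔰_κ(α)` maps `(-π/2, π/2)` monotonically onto itself with Jacobian
`𝔰_κ'`, so the factor `√𝔰_κ'` in `ψ^κ_{n,k}` makes the `α`-integral of `ψ^κ_{n,k} conj ψ^κ_{n',k'}`
equal to the `s`-integral of the same product at `κ = 0`. There the `β`-integral of
`e^{i((n-2k)-(n'-2k'))β}` forces `n - 2k = n' - 2k'`, hence `n ≡ n' (mod 2)`, and the remaining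
`s`-integral pairs the modes `e^{i(n+1)s} + (-1)ⁿ e^{-i(n+1)s}` (that is `2 cos ((n+1)s)` or
`2i sin ((n+1)s)`), whose cross terms `e^{2ijs}` integrate to `π δ_{j0}` over an interval of
length `π`. -/

open Set ComplexConjugate

lemma scatSig'_denom_pos {κ : ℝ} (hκ : κ ∈ Ioo (-1 : ℝ) 1) (α : ℝ) :
    0 < 1 + κ ^ 2 + 2 * κ * Real.cos (2 * α) := by
  obtain ⟨h₁, h₂⟩ := hκ
  have hc₁ := Real.neg_one_le_cos (2 * α)
  have hc₂ := Real.cos_le_one (2 * α)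
  rcases le_or_gt 0 κ with h | h <;> nlinarith

lemma scatSig'_pos {κ : ℝ} (hκ : κ ∈ Ioo (-1 : ℝ) 1) (α : ℝ) : 0 < scatSig' κ α :=
  div_pos (by nlinarith [hκ.1, hκ.2]) (scatSig'_denom_pos hκ α)

lemma scatSig_ratio_pos {κ : ℝ} (hκ : κ ∈ Ioo (-1 : ℝ) 1) : 0 < (1 - κ) / (1 + κ) :=
  div_pos (by linarith [hκ.2]) (by linarith [hκ.1])

lemma hasDerivAt_scatSig {κ : ℝ} (hκ : κ ∈ Ioo (-1 : ℝ) 1) {α : ℝ} (hα : Real.cos α ≠ 0) :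
    HasDerivAt (scatSig κ) (scatSig' κ α) α := by
  have hden := scatSig'_denom_pos hκ α
  have hκ₁ : 0 < 1 + κ := by linarith [hκ.1]
  refine ((Real.hasDerivAt_arctan _).comp α
    ((Real.hasDerivAt_tan hα).const_mul ((1 - κ) / (1 + κ)))).congr_deriv ?_
  rw [Real.cos_two_mul] at hden
  rw [scatSig', Real.tan_eq_sin_div_cos, Real.cos_two_mul]
  field_simp
  rw [eq_div_iff (by linarith)]
  linear_combination (-(1 - κ) ^ 3 * (1 + κ)) * Real.sin_sq_add_cos_sq α

lemma strictMonoOn_scatSig {κ : ℝ} (hκ : κ ∈ Ioo (-1 : ℝ) 1) :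
    StrictMonoOn (scatSig κ) (Ioo (-(π / 2)) (π / 2)) :=
  fun _ hx _ hy hxy => Real.arctan_strictMono
    (mul_lt_mul_of_pos_left (Real.strictMonoOn_tan hx hy hxy) (scatSig_ratio_pos hκ))

lemma scatSig_image_Ioo {κ : ℝ} (hκ : κ ∈ Ioo (-1 : ℝ) 1) :
    scatSig κ '' Ioo (-(π / 2)) (π / 2) = Ioo (-(π / 2)) (π / 2) := by
  refine Subset.antisymm (image_subset_iff.2 fun _ _ => Real.arctan_mem_Ioo _) fun s hs => ?_
  refine ⟨Real.arctan (Real.tan s / ((1 - κ) / (1 + κ))), Real.arctan_mem_Ioo _, ?_⟩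
  rw [scatSig, Real.tan_arctan, mul_div_cancel₀ _ (scatSig_ratio_pos hκ).ne',
    Real.arctan_tan hs.1 hs.2]

theorem integral_scatSig'_smul_comp {E : Type*} [NormedAddCommGroup E] [NormedSpace ℝ E]
    {κ : ℝ} (hκ : κ ∈ Ioo (-1 : ℝ) 1) (g : ℝ → E) :
    ∫ α in -(π / 2)..π / 2, scatSig' κ α • g (scatSig κ α) = ∫ s in -(π / 2)..π / 2, g s := by
  have hle : -(π / 2) ≤ π / 2 := by linarith [Real.pi_pos]
  rw [integral_of_le hle, integral_of_le hle, MeasureTheory.integral_Ioc_eq_integral_Ioo,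
    MeasureTheory.integral_Ioc_eq_integral_Ioo]
  conv_rhs => rw [← scatSig_image_Ioo hκ,
    MeasureTheory.integral_image_eq_integral_abs_deriv_smul measurableSet_Ioo
      (fun α hα => (hasDerivAt_scatSig hκ (Real.cos_pos_of_mem_Ioo hα).ne').hasDerivWithinAt)
      (strictMonoOn_scatSig hκ).injOn]
  simp_rw [abs_of_pos (scatSig'_pos hκ _)]

theorem integral_exp_int_mul_I {a b : ℝ} (m : ℤ) (h : exp (I * m * b) = exp (I * m * a)) :
    ∫ x in a..b, exp (I * m * x) = if m = 0 then (b - a : ℂ) else 0 := by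
  split_ifs with hm
  · simp [hm]
  · have hc : I * m ≠ 0 := mul_ne_zero I_ne_zero (Int.cast_ne_zero.2 hm)
    rw [integral_exp_mul_complex hc, h, sub_self, zero_div]

theorem integral_exp_int_mul_I_zero_two_pi (m : ℤ) :
    ∫ β in (0 : ℝ)..2 * π, exp (I * m * β) = if m = 0 then (2 * π : ℂ) else 0 := by
  have h : exp (I * m * ↑(2 * π)) = exp (I * m * ↑(0 : ℝ)) := by
    rw [ofReal_zero, mul_zero, Complex.exp_zero, ← exp_int_mul_two_pi_mul_I m]
    push_cast
    ring_nf
  rw [integral_exp_int_mul_I m h]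
  push_cast
  ring_nf

theorem integral_exp_int_mul_I_of_even {m : ℤ} (hm : Even m) :
    ∫ s in -(π / 2)..π / 2, exp (I * m * s) = if m = 0 then (π : ℂ) else 0 := by
  obtain ⟨j, rfl⟩ := hm
  have h : exp (I * ↑(j + j) * ↑(π / 2)) = exp (I * ↑(j + j) * ↑(-(π / 2))) := calc
    _ = exp (I * ↑(j + j) * ↑(-(π / 2)) + j * (2 * π * I)) := by push_cast; ring_nf
    _ = _ := by rw [Complex.exp_add, exp_int_mul_two_pi_mul_I, mul_one]
  rw [integral_exp_int_mul_I _ h]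
  push_cast
  ring_nf

noncomputable def trigMode (n : ℕ) (s : ℝ) : ℂ :=
  exp (I * ((n : ℂ) + 1) * s) + (-1) ^ n * exp (-I * ((n : ℂ) + 1) * s)

lemma trigMode_mul_conj (n n' : ℕ) (s : ℝ) :
    trigMode n s * conj (trigMode n' s) =
      exp (I * ((n - n' : ℤ) : ℂ) * s) + (-1) ^ n' * exp (I * ((n + n' + 2 : ℤ) : ℂ) * s) +
        (-1) ^ n * exp (I * ((-(n + n' + 2) : ℤ) : ℂ) * s) +
        (-1) ^ (n + n') * exp (I * ((n' - n : ℤ) : ℂ) * s) := by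
  simp only [trigMode, map_add, map_mul, map_pow, map_neg, map_one, ← exp_conj, conj_I,
    map_natCast, conj_ofReal]
  push_cast
  ring_nf
  simp only [← Complex.exp_add]
  ring_nf

theorem integral_trigMode_mul_conj {n n' : ℕ} (h : Even ((n : ℤ) - n')) :
    ∫ s in -(π / 2)..π / 2, trigMode n s * conj (trigMode n' s) =
      if n = n' then 2 * (π : ℂ) else 0 := by
  have hsum : Even ((n : ℤ) + n' + 2) := by
    obtain ⟨r, hr⟩ := h
    exact ⟨r + n' + 1, by omega⟩
  have hsum_ne : (n : ℤ) + n' + 2 ≠ 0 := by omega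
  simp_rw [trigMode_mul_conj]
  rw [integral_add, integral_add, integral_add, integral_const_mul, integral_const_mul,
    integral_const_mul, integral_exp_int_mul_I_of_even h, integral_exp_int_mul_I_of_even hsum,
    integral_exp_int_mul_I_of_even hsum.neg, integral_exp_int_mul_I_of_even (by simpa using h.neg)]
  · rw [if_neg hsum_ne, if_neg (neg_ne_zero.2 hsum_ne)]
    rcases eq_or_ne n n' with rfl | hne
    · simp only [sub_self, if_true, Even.neg_one_pow ⟨n, rfl⟩]
      ring
    · simp [hne, sub_eq_zero, eq_comm (a := (n' : ℤ))]
  all_goals exact Continuous.intervalIntegrable (by fun_prop) _ _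

lemma psi_eq_trigMode (κ : ℝ) (n : ℕ) (k : ℤ) (β α : ℝ) :
    psi κ n k β α = (-1) ^ n / (4 * π) * (√(scatSig' κ α) : ℂ) *
      exp (I * ((n - 2 * k : ℤ) : ℂ) * (β + scatSig κ α)) * trigMode n (scatSig κ α) := by
  simp [psi, trigMode]

lemma psi_mul_conj_psi {κ : ℝ} (hκ : κ ∈ Ioo (-1 : ℝ) 1) (n n' : ℕ) (k k' : ℤ) (β α : ℝ) :
    psi κ n k β α * conj (psi κ n' k' β α) =
      (-1) ^ (n + n') / (16 * π ^ 2) * exp (I * ((n - 2 * k - (n' - 2 * k') : ℤ) : ℂ) * β) *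
        (scatSig' κ α * (exp (I * ((n - 2 * k - (n' - 2 * k') : ℤ) : ℂ) * scatSig κ α) *
          (trigMode n (scatSig κ α) * conj (trigMode n' (scatSig κ α))))) := by
  set m : ℤ := n - 2 * k - (n' - 2 * k')
  have hsqrt : (√(scatSig' κ α) : ℂ) * √(scatSig' κ α) = scatSig' κ α := by
    rw [← ofReal_mul, Real.mul_self_sqrt (scatSig'_pos hκ α).le]
  have hexp : exp (I * ((n - 2 * k : ℤ) : ℂ) * (β + scatSig κ α)) *
      conj (exp (I * ((n' - 2 * k' : ℤ) : ℂ) * (β + scatSig κ α))) =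
      exp (I * m * β) * exp (I * m * scatSig κ α) := by
    rw [← exp_conj, ← Complex.exp_add, ← Complex.exp_add]
    simp only [m, map_mul, conj_I, map_intCast, map_add, conj_ofReal]
    push_cast
    ring_nf
  rw [psi_eq_trigMode, psi_eq_trigMode]
  simp only [map_mul, map_div₀, map_pow, map_neg, map_one, map_ofNat, conj_ofReal]
  linear_combination ((-1) ^ (n + n') / (16 * π ^ 2) * trigMode n (scatSig κ α) *
    conj (trigMode n' (scatSig κ α))) *
    ((√(scatSig' κ α) : ℂ) * √(scatSig' κ α) * hexp +
      exp (I * m * β) * exp (I * m * scatSig κ α) * hsqrt)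

lemma integral_integral_psi_mul_conj_psi {κ : ℝ} (hκ : κ ∈ Ioo (-1 : ℝ) 1)
    (n n' : ℕ) (k k' : ℤ) :
    ∫ β in (0 : ℝ)..(2 * π), ∫ α in (-(π / 2))..(π / 2), psi κ n k β α * conj (psi κ n' k' β α) =
      (-1) ^ (n + n') / (16 * π ^ 2) *
        (∫ β in (0 : ℝ)..(2 * π), exp (I * ((n - 2 * k - (n' - 2 * k') : ℤ) : ℂ) * β)) *
        ∫ s in (-(π / 2))..(π / 2), exp (I * ((n - 2 * k - (n' - 2 * k') : ℤ) : ℂ) * s) *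
          (trigMode n s * conj (trigMode n' s)) := by
  set m : ℤ := n - 2 * k - (n' - 2 * k') with hm
  simp_rw [psi_mul_conj_psi hκ, ← hm, integral_const_mul, ← real_smul,
    integral_scatSig'_smul_comp hκ fun s => exp (I * m * s) * (trigMode n s * conj (trigMode n' s)),
    integral_mul_const, integral_const_mul]

/-- For `κ ∈ (-1,1)`, the family `ψ^κ_{n,k}` is orthogonal in `L²(∂₊SM, dΣ²)`, with squared
norm `1/(4(1+κ))`: the weighted inner product
`(1/(1+κ)) ∫₀^{2π} ∫_{-π/2}^{π/2} ψ^κ_{n,k} conj(ψ^κ_{n',k'}) dα dβ` equals `1/(4(1+κ))` if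
`(n,k) = (n',k')` and `0` otherwise. -/
theorem psi_orthogonal (κ : ℝ) (hκ : κ ∈ Set.Ioo (-1 : ℝ) 1)
    (n n' : ℕ) (k k' : ℤ) :
    (1 / (1 + (κ : ℂ))) *
      ∫ β in (0 : ℝ)..(2 * π), ∫ α in (-(π / 2))..(π / 2),
        psi κ n k β α * (starRingEnd ℂ) (psi κ n' k' β α) =
      if n = n' ∧ k = k' then (1 / (4 * (1 + (κ : ℂ)))) else 0 := by
  rw [integral_integral_psi_mul_conj_psi hκ, integral_exp_int_mul_I_zero_two_pi]
  set m : ℤ := n - 2 * k - (n' - 2 * k')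
  rcases eq_or_ne m 0 with hm0 | hm0
  · have hpar : Even ((n : ℤ) - n') := ⟨k - k', by omega⟩
    simp only [hm0, if_true, Int.cast_zero, mul_zero, zero_mul, Complex.exp_zero, one_mul,
      integral_trigMode_mul_conj hpar]
    rcases eq_or_ne n n' with rfl | hne
    · obtain rfl : k = k' := by omega
      have hπ : (π : ℂ) ≠ 0 := ofReal_ne_zero.2 Real.pi_ne_zero
      have hκ₁ : 1 + (κ : ℂ) ≠ 0 := by exact_mod_cast (by linarith [hκ.1] : 1 + κ ≠ 0)
      simp only [and_self, if_true, Even.neg_one_pow ⟨n, rfl⟩]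
      field_simp
      ring
    · simp [hne]
  · have hne : ¬(n = n' ∧ k = k') := by rintro ⟨rfl, rfl⟩; exact hm0 (by omega)
    simp [hm0, hne]
end

section
/- For all integers n ≥ 0 and 0 ≤ k ≤ n, ((-1)^n/(2π))·∫₀^{2π} e^{i(n-2k)θ}·W_n(sinθ) dθ = (-1)^k. Equivalently, the Zernike function Z_{n,k}(ρe^{iω}) = ((-1)^n/(2π))·∫₀^{2π} e^{i(n-2k)θ}·W_n(ρsin(θ-ω)) dθ satisfies the boundary condition Z_{n,k}(e^{iω}) = (-1)^k e^{i(n-2k)ω} for all ω. -/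
/-! With `z = e^{iθ}` one has `2i sin θ = z - z⁻¹`, and the three-term recurrence of `W` shows
`W_n(sin θ) = ∑_{j=0}^{n} (-1)^j z^{n-2j}`. Multiplying by `e^{i(n-2k)θ} = z^{n-2k}` and integrating
over the circle, orthogonality of the characters `θ ↦ z^m` keeps only the term `j = n - k`, which
contributes `(-1)^{n-k} · 2π`. -/

open Real Complex intervalIntegral

/-- The polynomials `W_n(t) = iⁿ U_n(t)` (`U_n` the Chebyshev polynomials of the second kind):
`W₀(t) = 1`, `W₁(t) = 2it`, `W_{n+2}(t) = 2it W_{n+1}(t) + W_n(t)`. -/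
noncomputable def W : ℕ → ℂ → ℂ
  | 0, _ => 1
  | 1, t => 2 * Complex.I * t
  | (n + 2), t => 2 * Complex.I * t * W (n + 1) t + W n t

open Finset

section AlternatingZpowSum

variable {K : Type*} [Field K]

def alternatingZpowSum (n : ℕ) (z : K) : K :=
  ∑ j ∈ range (n + 1), (-1) ^ j * z ^ ((n : ℤ) - 2 * j)

variable {z : K}

lemma alternatingZpowSum_succ (hz : z ≠ 0) (m : ℕ) :
    alternatingZpowSum (m + 1) z
      = z * (alternatingZpowSum m z + (-1) ^ (m + 1) * z ^ ((m : ℤ) - 2 * (m + 1 : ℕ))) := by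
  rw [alternatingZpowSum, alternatingZpowSum, ← sum_range_succ, mul_sum]
  refine sum_congr rfl fun j _ => ?_
  rw [show ((m + 1 : ℕ) : ℤ) - 2 * j = 1 + ((m : ℤ) - 2 * j) by push_cast; ring,
    zpow_add₀ hz, zpow_one]
  ring

lemma alternatingZpowSum_add_two (hz : z ≠ 0) (m : ℕ) :
    alternatingZpowSum (m + 2) z
      = (z - z⁻¹) * alternatingZpowSum (m + 1) z + alternatingZpowSum m z := by
  have hexp : z ^ (((m + 1 : ℕ) : ℤ) - 2 * (m + 1 + 1 : ℕ))
      = z ^ ((m : ℤ) - 2 * (m + 1 : ℕ)) * z⁻¹ := by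
    rw [← zpow_sub_one₀ hz]; push_cast; ring_nf
  rw [alternatingZpowSum_succ hz (m + 1), hexp, alternatingZpowSum_succ hz m]
  field_simp
  ring

end AlternatingZpowSum

lemma W_eq_alternatingZpowSum {z t : ℂ} (hz : z ≠ 0) (ht : 2 * I * t = z - z⁻¹) (n : ℕ) :
    W n t = alternatingZpowSum n z := by
  induction n using Nat.twoStepInduction with
  | zero => simp [W, alternatingZpowSum]
  | one => simp [W, alternatingZpowSum, sum_range_succ, ht, sub_eq_add_neg]
  | more m ih₀ ih₁ => rw [W, alternatingZpowSum_add_two hz, ← ht, ih₀, ih₁]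

lemma two_mul_I_mul_sin (x : ℂ) : 2 * I * sin x = exp (x * I) - (exp (x * I))⁻¹ := by
  rw [mul_right_comm, two_sin, mul_assoc, I_mul_I, neg_mul, Complex.exp_neg]
  ring

lemma W_sin (n : ℕ) (θ : ℝ) :
    W n (Real.sin θ) = alternatingZpowSum n (exp (θ * I)) :=
  W_eq_alternatingZpowSum (Complex.exp_ne_zero _) (by rw [ofReal_sin, two_mul_I_mul_sin]) n

lemma integral_exp_mul_I_zpow (m : ℤ) :
    ∫ θ in (0 : ℝ)..(2 * π), exp (θ * I) ^ m = if m = 0 then (2 * π : ℂ) else 0 := by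
  simp_rw [← exp_int_mul, show ∀ θ : ℂ, (m : ℂ) * (θ * I) = m * I * θ from fun θ ↦ by ring]
  split_ifs with hm
  · simp [hm]
  · have hc : (m : ℂ) * I ≠ 0 := by simp [hm]
    rw [integral_exp_mul_complex hc, ofReal_mul, ofReal_ofNat,
      show (m : ℂ) * I * (2 * π) = m * (2 * π * I) by ring, exp_int_mul_two_pi_mul_I]
    simp

lemma integral_exp_mul_I_zpow_mul_alternatingZpowSum {n j : ℕ} (hj : j ≤ n) :
    ∫ θ in (0 : ℝ)..(2 * π), exp (θ * I) ^ (2 * (j : ℤ) - n) * alternatingZpowSum n (exp (θ * I))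
      = (-1) ^ j * (2 * π) := by
  have hterm : ∀ (θ : ℝ) (i : ℕ),
      exp (θ * I) ^ (2 * (j : ℤ) - n) * ((-1) ^ i * exp (θ * I) ^ ((n : ℤ) - 2 * i))
        = (-1) ^ i * exp (θ * I) ^ (2 * ((j : ℤ) - i)) := by
    intro θ i
    rw [mul_left_comm, ← zpow_add₀ (Complex.exp_ne_zero _)]
    ring_nf
  simp_rw [alternatingZpowSum, mul_sum, hterm]
  rw [intervalIntegral.integral_finsetSum]
  · simp_rw [intervalIntegral.integral_const_mul, integral_exp_mul_I_zpow]
    rw [sum_eq_single j]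
    · simp
    · intro i _ hij
      rw [if_neg (by omega), mul_zero]
    · exact fun h ↦ absurd (mem_range.mpr (by omega)) h
  · intro i _
    apply Continuous.intervalIntegrable
    fun_prop (disch := simp)

/-- For all integers `n ≥ 0` and `0 ≤ k ≤ n`,
`((-1)^n/(2π)) ∫₀^{2π} e^{i(n-2k)θ} W_n(sin θ) dθ = (-1)^k`, i.e. the Zernike function
`Z_{n,k}` satisfies the boundary condition `Z_{n,k}(e^{iω}) = (-1)^k e^{i(n-2k)ω}`. -/
theorem Znk_boundary_value (n k : ℕ) (hk : k ≤ n) :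
    ((-1 : ℂ) ^ n / (2 * π)) *
      ∫ θ in (0 : ℝ)..(2 * π),
        Complex.exp (Complex.I * ((n : ℂ) - 2 * k) * θ) * W n ((Real.sin θ : ℝ) : ℂ) =
      (-1 : ℂ) ^ k := by
  have hexp : ∀ θ : ℝ,
      exp (I * ((n : ℂ) - 2 * k) * θ) = exp (θ * I) ^ (2 * ((n - k : ℕ) : ℤ) - n) := by
    intro θ
    rw [← exp_int_mul]
    push_cast [hk]
    ring_nf
  simp_rw [hexp, W_sin, integral_exp_mul_I_zpow_mul_alternatingZpowSum (Nat.sub_le n k)]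
  field_simp
  rw [← pow_add, show n + (n - k) = k + 2 * (n - k) by omega, pow_add, pow_mul]
  norm_num
end

section
/- Let κ ∈ (-1,1), let 𝔻 denote the open unit disk in ℂ, and let Φ(z) = (1-κ)z/(1-κ|z|²), which maps 𝔻 bijectively onto itself. Let F, G : 𝔻 → ℂ be measurable with F·conj(G) Lebesgue-integrable on 𝔻. Define f(z) = √((1-κ)/(1+κ))·((1+κ|z|²)/(1-κ|z|²))·F(Φ(z)) and g(z) = √((1-κ)/(1+κ))·((1+κ|z|²)/(1-κ|z|²))·G(Φ(z)). Then ∫_𝔻 f(z)·conj(g(z))·((1+κ|z|²)/(1-κ|z|²))·(1+κ|z|²)^{-2} dA(z) = (1/(1-κ²))·∫_𝔻 F(w)·conj(G(w)) dA(w), where dA denotes Lebesgue measure on ℂ. -/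
/-!
`Φ` is the radial map `z ↦ c(|z|) z` with `c(r) = (1-κ)/(1-κr²) > 0`, and its radial profile
`r ↦ r c(r)` is an increasing bijection of `[0,1)`; hence `Φ` is a bijection of the disk.
The real derivative of `Φ` has the form `h ↦ a h + b h̄`, so its Jacobian is
`|a|² - |b|² = (1-κ)²(1+κ|z|²)/(1-κ|z|²)³`. The weight `(1-κ)/(1+κ) · ((1+κ|z|²)/(1-κ|z|²))³
· (1+κ|z|²)⁻²` produced by `f conj(g)` is exactly `1/(1-κ²)` times this Jacobian, so the identity
is the change-of-variables formula for `Φ`.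
-/

open Complex MeasureTheory Metric Set ComplexConjugate

lemma one_add_mul_pos_of_abs_lt_one {κ t : ℝ} (hκ : |κ| < 1) (ht : |t| ≤ 1) :
    0 < 1 + κ * t := by
  have : |κ * t| < 1 := by
    rw [abs_mul]; exact mul_lt_one_of_nonneg_of_lt_one_left (abs_nonneg κ) hκ ht
  linarith [neg_abs_le (κ * t)]

lemma one_add_mul_sq_pos_of_abs_lt_one {κ r : ℝ} (hκ : |κ| < 1) (hr : |r| ≤ 1) :
    0 < 1 + κ * r ^ 2 :=
  one_add_mul_pos_of_abs_lt_one hκ (by rw [abs_pow]; exact pow_le_one₀ (abs_nonneg r) hr)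

lemma one_sub_mul_sq_pos_of_abs_lt_one {κ r : ℝ} (hκ : |κ| < 1) (hr : |r| ≤ 1) :
    0 < 1 - κ * r ^ 2 := by
  simpa [sub_eq_add_neg] using one_add_mul_sq_pos_of_abs_lt_one (κ := -κ) (by rwa [abs_neg]) hr

lemma bijOn_ball_smul_of_bijOn_Ico {E : Type*} [NormedAddCommGroup E] [NormedSpace ℝ E]
    {c : ℝ → ℝ} (hc : ∀ r ∈ Ico (0 : ℝ) 1, 0 < c r)
    (h : BijOn (fun r => r * c r) (Ico 0 1) (Ico 0 1)) :
    BijOn (fun x : E => c ‖x‖ • x) (ball 0 1) (ball 0 1) := by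
  have hIco : ∀ x : E, x ∈ ball 0 1 → ‖x‖ ∈ Ico (0 : ℝ) 1 := fun x hx =>
    ⟨norm_nonneg x, mem_ball_zero_iff.mp hx⟩
  have hnorm : ∀ x : E, x ∈ ball 0 1 → ‖c ‖x‖ • x‖ = ‖x‖ * c ‖x‖ := fun x hx => by
    rw [norm_smul, Real.norm_of_nonneg (hc _ (hIco x hx)).le, mul_comm]
  refine ⟨fun x hx => ?_, fun x hx y hy hxy => ?_, fun y hy => ?_⟩
  · rw [mem_ball_zero_iff, hnorm x hx]
    exact (h.mapsTo (hIco x hx)).2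
  · have hxy' : ‖x‖ = ‖y‖ := h.injOn (hIco x hx) (hIco y hy) <| by
      simpa only [hnorm x hx, hnorm y hy] using congrArg norm hxy
    simp only [hxy'] at hxy
    exact smul_right_injective E (hc _ (hIco y hy)).ne' hxy
  · obtain ⟨r, hr, hry⟩ := h.surjOn (hIco y hy)
    rcases eq_or_ne y 0 with rfl | hy0
    · exact ⟨0, mem_ball_self one_pos, by simp⟩
    have hy' : 0 < ‖y‖ := norm_pos_iff.mpr hy0
    have hnr : ‖(r / ‖y‖) • y‖ = r := by
      rw [norm_smul, Real.norm_of_nonneg (div_nonneg hr.1 hy'.le), div_mul_cancel₀ _ hy'.ne']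
    refine ⟨(r / ‖y‖) • y, mem_ball_zero_iff.mpr (hnr.symm ▸ hr.2), ?_⟩
    simp only [hnr, smul_smul] at hry ⊢
    rw [← mul_div_assoc, mul_comm, hry, div_self hy'.ne', one_smul]

lemma strictMonoOn_mul_div_one_sub_mul_sq {κ : ℝ} (hκ : |κ| < 1) :
    StrictMonoOn (fun r : ℝ => r * ((1 - κ) / (1 - κ * r ^ 2))) (Icc 0 1) := by
  intro r hr s hs hrs
  have hpos : ∀ t ∈ Icc (0 : ℝ) 1, 0 < 1 - κ * t ^ 2 := fun t ht =>
    one_sub_mul_sq_pos_of_abs_lt_one hκ ((abs_of_nonneg ht.1).le.trans ht.2)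
  have hrs' : 0 < 1 + κ * (r * s) := one_add_mul_pos_of_abs_lt_one hκ (by
    rw [abs_of_nonneg (mul_nonneg hr.1 hs.1)]; nlinarith [hr.1, hr.2, hs.1, hs.2])
  have h1κ : 0 < 1 - κ := by linarith [le_abs_self κ]
  simp only
  rw [mul_div_assoc', mul_div_assoc', div_lt_div_iff₀ (hpos r hr) (hpos s hs)]
  nlinarith [mul_pos (mul_pos (sub_pos.mpr hrs) hrs') h1κ]

lemma bijOn_Ico_mul_div_one_sub_mul_sq {κ : ℝ} (hκ : |κ| < 1) :
    BijOn (fun r : ℝ => r * ((1 - κ) / (1 - κ * r ^ 2))) (Ico 0 1) (Ico 0 1) := by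
  set φ := fun r : ℝ => r * ((1 - κ) / (1 - κ * r ^ 2)) with hφ
  have hmono : StrictMonoOn φ (Icc 0 1) := strictMonoOn_mul_div_one_sub_mul_sq hκ
  have h0 : φ 0 = 0 := by simp [hφ]
  have h1 : φ 1 = 1 := by
    have : 1 - κ ≠ 0 := by linarith [le_abs_self κ]
    simp [hφ, this]
  have h01 : (0 : ℝ) ∈ Icc 0 1 := left_mem_Icc.mpr zero_le_one
  have h11 : (1 : ℝ) ∈ Icc 0 1 := right_mem_Icc.mpr zero_le_one
  refine ⟨fun r hr => ?_, hmono.injOn.mono Ico_subset_Icc_self, ?_⟩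
  · rw [← h0, ← h1]
    exact ⟨hmono.monotoneOn h01 (Ico_subset_Icc_self hr) hr.1,
      hmono (Ico_subset_Icc_self hr) h11 hr.2⟩
  · have hcont : ContinuousOn φ (Icc 0 1) :=
      continuousOn_id.mul <| continuousOn_const.div (by fun_prop) fun r hr =>
        (one_sub_mul_sq_pos_of_abs_lt_one hκ ((abs_of_nonneg hr.1).le.trans hr.2)).ne'
    have := intermediate_value_Ico zero_le_one hcont
    rwa [h0, h1] at this

noncomputable def mulAddConjCLM (a b : ℂ) : ℂ →L[ℝ] ℂ :=
  a • ContinuousLinearMap.id ℝ ℂ + b • conjCLE.toContinuousLinearMap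

@[simp]
lemma mulAddConjCLM_apply (a b h : ℂ) : mulAddConjCLM a b h = a * h + b * conj h := rfl

lemma det_mulAddConjCLM (a b : ℂ) : (mulAddConjCLM a b).det = normSq a - normSq b := by
  rw [ContinuousLinearMap.det, ← LinearMap.det_toMatrix basisOneI, Matrix.det_fin_two]
  simp only [LinearMap.toMatrix_apply, coe_basisOneI, ContinuousLinearMap.coe_coe,
    Matrix.cons_val_zero, Matrix.cons_val_one, coe_basisOneI_repr, mulAddConjCLM_apply, mul_one,
    map_one, conj_I, add_re, add_im, mul_re, mul_im, I_re, I_im, neg_re, neg_im, mul_neg, mul_zero,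
    add_zero, zero_sub, neg_neg, normSq_apply]
  ring

noncomputable def diskMap (κ : ℝ) (z : ℂ) : ℂ :=
  ((1 - κ : ℝ) : ℂ) * z / ((1 - κ * ‖z‖ ^ 2 : ℝ) : ℂ)

noncomputable def diskMapDeriv (κ : ℝ) (z : ℂ) : ℂ →L[ℝ] ℂ :=
  mulAddConjCLM (((1 - κ) / (1 - κ * ‖z‖ ^ 2) ^ 2 : ℝ) : ℂ)
    (((κ * (1 - κ) / (1 - κ * ‖z‖ ^ 2) ^ 2 : ℝ) : ℂ) * z ^ 2)

noncomputable def diskMapJacobian (κ r : ℝ) : ℝ :=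
  (1 - κ) ^ 2 * (1 + κ * r ^ 2) / (1 - κ * r ^ 2) ^ 3

lemma diskMap_eq_smul (κ : ℝ) (z : ℂ) : diskMap κ z = ((1 - κ) / (1 - κ * ‖z‖ ^ 2)) • z := by
  rw [diskMap, real_smul, ofReal_div, mul_div_right_comm]

lemma bijOn_diskMap {κ : ℝ} (hκ : |κ| < 1) : BijOn (diskMap κ) (ball 0 1) (ball 0 1) := by
  rw [funext (diskMap_eq_smul κ)]
  refine bijOn_ball_smul_of_bijOn_Ico (c := fun r => (1 - κ) / (1 - κ * r ^ 2))
    (fun r hr => div_pos ?_ ?_) (bijOn_Ico_mul_div_one_sub_mul_sq hκ)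
  · linarith [le_abs_self κ]
  · exact one_sub_mul_sq_pos_of_abs_lt_one hκ ((abs_of_nonneg hr.1).le.trans hr.2.le)

lemma ofReal_one_sub_mul_norm_sq (κ : ℝ) (z : ℂ) :
    ((1 - κ * ‖z‖ ^ 2 : ℝ) : ℂ) = 1 - κ * (z * conj z) := by
  rw [mul_conj, normSq_eq_norm_sq]
  push_cast
  ring

lemma hasFDerivAt_diskMap {κ : ℝ} {z : ℂ} (hz : 1 - κ * ‖z‖ ^ 2 ≠ 0) :
    HasFDerivAt (diskMap κ) (diskMapDeriv κ z) z := by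
  have hform : diskMap κ = fun w : ℂ => ((1 - κ : ℝ) : ℂ) * w * (1 - κ * (w * conj w))⁻¹ := by
    funext w
    rw [diskMap, div_eq_mul_inv, ofReal_one_sub_mul_norm_sq]
  have hden_ne : (1 : ℂ) - κ * (z * conj z) ≠ 0 := by
    rw [← ofReal_one_sub_mul_norm_sq]; exact ofReal_ne_zero.mpr hz
  have hden : HasFDerivAt (fun w : ℂ => 1 - κ * (w * conj w))
      (-((κ : ℂ) • (z • conjCLE.toContinuousLinearMap + conj z • ContinuousLinearMap.id ℝ ℂ)))
      z :=
    (((hasFDerivAt_id z).mul conjCLE.hasFDerivAt).const_mul (κ : ℂ)).const_sub 1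
  have hinv := ((hasDerivAt_inv hden_ne).hasFDerivAt.restrictScalars ℝ).comp z hden
  rw [hform]
  refine (((hasFDerivAt_id z).const_mul ((1 - κ : ℝ) : ℂ)).mul hinv).congr_fderiv ?_
  ext h
  have hz' : (1 : ℂ) - κ * ‖z‖ ^ 2 ≠ 0 := by exact_mod_cast hz
  have hzz : z * conj z = (‖z‖ : ℂ) ^ 2 := by rw [mul_conj, normSq_eq_norm_sq]; push_cast; rfl
  simp only [diskMapDeriv, mulAddConjCLM_apply, hzz, id_eq, smul_add, coe_smul, neg_add_rev,
    ContinuousLinearMap.comp_add, ContinuousLinearMap.comp_neg, ContinuousLinearMap.comp_smulₛₗ,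
    Real.ringHom_apply, smul_neg, Function.comp_apply, add_apply, neg_apply, smul_apply,
    ContinuousLinearMap.comp_apply, ContinuousLinearMap.id_apply, smul_eq_mul,
    ContinuousLinearMap.coe_restrictScalars', ContinuousLinearMap.toSpanSingleton_apply, mul_neg,
    real_smul, neg_neg, ContinuousLinearEquiv.coe_coe, ContinuousAlgEquiv.coeCLE_apply,
    conjCAE_apply, ofReal_div, ofReal_pow, ofReal_mul, ofReal_sub, ofReal_one]
  field_simp
  linear_combination (κ - κ ^ 2) * h * hzz

lemma det_diskMapDeriv {κ : ℝ} {z : ℂ} (hz : 1 - κ * ‖z‖ ^ 2 ≠ 0) :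
    (diskMapDeriv κ z).det = diskMapJacobian κ ‖z‖ := by
  rw [diskMapDeriv, diskMapJacobian, det_mulAddConjCLM, normSq_mul, normSq_ofReal, normSq_ofReal,
    map_pow, normSq_eq_norm_sq]
  field_simp
  ring

lemma diskMapJacobian_pos {κ r : ℝ} (hκ : |κ| < 1) (hr : |r| ≤ 1) : 0 < diskMapJacobian κ r := by
  have h1κ : 0 < 1 - κ := by linarith [le_abs_self κ]
  have hadd := one_add_mul_sq_pos_of_abs_lt_one hκ hr
  have hsub := one_sub_mul_sq_pos_of_abs_lt_one hκ hr
  unfold diskMapJacobian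
  positivity

lemma integral_ball_diskMapJacobian_smul_comp_diskMap {E : Type*} [NormedAddCommGroup E]
    [NormedSpace ℝ E] {κ : ℝ} (hκ : |κ| < 1) (H : ℂ → E) :
    ∫ z in ball (0 : ℂ) 1, diskMapJacobian κ ‖z‖ • H (diskMap κ z) =
      ∫ w in ball (0 : ℂ) 1, H w := by
  have hnorm : ∀ z ∈ ball (0 : ℂ) 1, |‖z‖| ≤ 1 := fun z hz =>
    (abs_norm z).le.trans (mem_ball_zero_iff.mp hz).le
  have hderiv : ∀ z ∈ ball (0 : ℂ) 1,
      HasFDerivWithinAt (diskMap κ) (diskMapDeriv κ z) (ball 0 1) z :=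
    fun z hz => (hasFDerivAt_diskMap
      (one_sub_mul_sq_pos_of_abs_lt_one hκ (hnorm z hz)).ne').hasFDerivWithinAt
  have hcv := integral_image_eq_integral_abs_det_fderiv_smul volume measurableSet_ball hderiv
    (bijOn_diskMap hκ).injOn H
  rw [(bijOn_diskMap hκ).image_eq] at hcv
  rw [hcv]
  refine setIntegral_congr_fun measurableSet_ball fun z hz => ?_
  rw [det_diskMapDeriv (one_sub_mul_sq_pos_of_abs_lt_one hκ (hnorm z hz)).ne',
    abs_of_pos (diskMapJacobian_pos hκ (hnorm z hz))]

lemma sqrt_sq_mul_weight_eq_diskMapJacobian {κ r : ℝ} (hκ : |κ| < 1) (hr : |r| ≤ 1) :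
    √((1 - κ) / (1 + κ)) ^ 2 * ((1 + κ * r ^ 2) / (1 - κ * r ^ 2)) ^ 2 *
        ((1 + κ * r ^ 2) / (1 - κ * r ^ 2) / (1 + κ * r ^ 2) ^ 2)
      = 1 / (1 - κ ^ 2) * diskMapJacobian κ r := by
  obtain ⟨hκ₁, hκ₂⟩ := abs_lt.mp hκ
  have hadd := one_add_mul_sq_pos_of_abs_lt_one hκ hr
  have hsub := one_sub_mul_sq_pos_of_abs_lt_one hκ hr
  have h1κ : 0 < 1 - κ := by linarith
  have h1κ' : 0 < 1 + κ := by linarith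
  rw [Real.sq_sqrt (by positivity), show 1 - κ ^ 2 = (1 - κ) * (1 + κ) by ring, diskMapJacobian]
  field_simp

theorem weighted_change_of_variables_general (κ : ℝ) (hκ : κ ∈ Set.Ioo (-1 : ℝ) 1)
    (F G : ℂ → ℂ)
    (f g : ℂ → ℂ)
    (hf : ∀ z : ℂ, f z = (Real.sqrt ((1 - κ) / (1 + κ)) : ℂ) *
        (((1 + κ * ‖z‖ ^ 2) / (1 - κ * ‖z‖ ^ 2) : ℝ) : ℂ) *
        F (((1 - κ : ℝ) : ℂ) * z / (((1 - κ * ‖z‖ ^ 2 : ℝ)) : ℂ)))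
    (hg : ∀ z : ℂ, g z = (Real.sqrt ((1 - κ) / (1 + κ)) : ℂ) *
        (((1 + κ * ‖z‖ ^ 2) / (1 - κ * ‖z‖ ^ 2) : ℝ) : ℂ) *
        G (((1 - κ : ℝ) : ℂ) * z / (((1 - κ * ‖z‖ ^ 2 : ℝ)) : ℂ))) :
    Set.BijOn (fun z : ℂ => (((1 - κ : ℝ)) : ℂ) * z / (((1 - κ * ‖z‖ ^ 2 : ℝ)) : ℂ))
        (Metric.ball (0 : ℂ) 1) (Metric.ball (0 : ℂ) 1) ∧
    ∫ z in Metric.ball (0 : ℂ) 1,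
        f z * (starRingEnd ℂ) (g z) *
          ((((1 + κ * ‖z‖ ^ 2) / (1 - κ * ‖z‖ ^ 2)) / (1 + κ * ‖z‖ ^ 2) ^ 2 : ℝ) : ℂ) =
      ((1 / (1 - κ ^ 2) : ℝ) : ℂ) *
        ∫ w in Metric.ball (0 : ℂ) 1, F w * (starRingEnd ℂ) (G w) := by
  have hκ' : |κ| < 1 := abs_lt.mpr hκ
  refine ⟨bijOn_diskMap hκ', ?_⟩
  rw [← integral_ball_diskMapJacobian_smul_comp_diskMap hκ' fun w => F w * conj (G w),
    ← integral_const_mul]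
  refine setIntegral_congr_fun measurableSet_ball fun z hz => ?_
  have hweight := congrArg ((↑) : ℝ → ℂ) <| sqrt_sq_mul_weight_eq_diskMapJacobian hκ'
    ((abs_norm z).le.trans (mem_ball_zero_iff.mp hz).le)
  rw [hf, hg, ← diskMap]
  generalize F (diskMap κ z) = u
  generalize G (diskMap κ z) = v
  simp only [map_mul, conj_ofReal, real_smul]
  push_cast at hweight ⊢
  linear_combination u * conj v * hweight

/-- Let `κ ∈ (-1,1)`, let `𝔻` be the open unit disk in `ℂ`, and let
`Φ(z) = (1-κ)z/(1-κ|z|²)`, which maps `𝔻` bijectively onto itself. If `F, G : 𝔻 → ℂ` are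
measurable with `F conj(G)` integrable on `𝔻`, and
`f(z) = √((1-κ)/(1+κ)) ((1+κ|z|²)/(1-κ|z|²)) F(Φ(z))` (similarly for `g` from `G`), then
`∫_𝔻 f conj(g) ((1+κ|z|²)/(1-κ|z|²)) (1+κ|z|²)^{-2} dA = (1/(1-κ²)) ∫_𝔻 F conj(G) dA`. -/
theorem weighted_change_of_variables (κ : ℝ) (hκ : κ ∈ Set.Ioo (-1 : ℝ) 1)
    (F G : ℂ → ℂ) (hF : Measurable F) (hG : Measurable G)
    (hFG : IntegrableOn (fun w => F w * (starRingEnd ℂ) (G w)) (Metric.ball (0 : ℂ) 1) volume)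
    (f g : ℂ → ℂ)
    (hf : ∀ z : ℂ, f z = (Real.sqrt ((1 - κ) / (1 + κ)) : ℂ) *
        (((1 + κ * ‖z‖ ^ 2) / (1 - κ * ‖z‖ ^ 2) : ℝ) : ℂ) *
        F (((1 - κ : ℝ) : ℂ) * z / (((1 - κ * ‖z‖ ^ 2 : ℝ)) : ℂ)))
    (hg : ∀ z : ℂ, g z = (Real.sqrt ((1 - κ) / (1 + κ)) : ℂ) *
        (((1 + κ * ‖z‖ ^ 2) / (1 - κ * ‖z‖ ^ 2) : ℝ) : ℂ) *
        G (((1 - κ : ℝ) : ℂ) * z / (((1 - κ * ‖z‖ ^ 2 : ℝ)) : ℂ))) :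
    Set.BijOn (fun z : ℂ => (((1 - κ : ℝ)) : ℂ) * z / (((1 - κ * ‖z‖ ^ 2 : ℝ)) : ℂ))
        (Metric.ball (0 : ℂ) 1) (Metric.ball (0 : ℂ) 1) ∧
    ∫ z in Metric.ball (0 : ℂ) 1,
        f z * (starRingEnd ℂ) (g z) *
          ((((1 + κ * ‖z‖ ^ 2) / (1 - κ * ‖z‖ ^ 2)) / (1 + κ * ‖z‖ ^ 2) ^ 2 : ℝ) : ℂ) =
      ((1 / (1 - κ ^ 2) : ℝ) : ℂ) *
        ∫ w in Metric.ball (0 : ℂ) 1, F w * (starRingEnd ℂ) (G w) :=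
  weighted_change_of_variables_general κ hκ F G f g hf hg
end

section
/- Let κ ∈ (-1,1) and ρ ∈ [0,1]. For θ ∈ ℝ define θ'(θ) = θ - arctan( κρ²·sin(2θ) / (1 + κρ²·cos(2θ)) ). Then θ' is differentiable in θ with dθ'/dθ = (1 - κ²ρ⁴) / ((1+κρ²)² - 4κρ²·sin²θ); in particular the denominator (1+κρ²)² - 4κρ²sin²θ = 1 + κ²ρ⁴ + 2κρ²cos(2θ) is positive. Moreover sin²(θ'(θ)) = (1-κρ²)²·sin²θ / ((1+κρ²)² - 4κρ²·sin²θ), and sin(θ'(θ)) has the same sign as sin(θ). -/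
/-!
Write `a = κρ²`. Since `|a| < 1`, the real part `1 + a cos 2θ` of `1 + a e^{2iθ}` is positive, so
`θ' = θ - arg (1 + a e^{2iθ})` and `|1 + a e^{2iθ}|² = 1 + a² + 2a cos 2θ = (1 + a)² - 4a sin²θ`.
Expanding `sin (θ - arctan t)` then gives `sin θ' = (1 - a) sin θ / |1 + a e^{2iθ}|`, which yields
both the formula for `sin² θ'` and the sign statement; the derivative is a direct computation.
-/

open Real

noncomputable section

namespace FiberChange

/-- The fiber change of variable `θ ↦ θ'` for the parameter `a = κρ²`. -/
def fiberAngle (a θ : ℝ) : ℝ :=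
  θ - arctan (a * sin (2 * θ) / (1 + a * cos (2 * θ)))

lemma sign_mul_of_pos {c : ℝ} (hc : 0 < c) (x : ℝ) : Real.sign (c * x) = Real.sign x := by
  rcases lt_trichotomy x 0 with hx | rfl | hx
  · rw [Real.sign_of_neg (mul_neg_of_pos_of_neg hc hx), Real.sign_of_neg hx]
  · rw [mul_zero]
  · rw [Real.sign_of_pos (mul_pos hc hx), Real.sign_of_pos hx]

lemma sq_one_add_sub_four_mul_sin_sq (a θ : ℝ) :
    (1 + a) ^ 2 - 4 * a * sin θ ^ 2 = 1 + a ^ 2 + 2 * a * cos (2 * θ) := by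
  rw [cos_two_mul]
  linear_combination (-4 * a) * sin_sq_add_cos_sq θ

lemma one_add_mul_cos_pos {a : ℝ} (ha : |a| < 1) (x : ℝ) : 0 < 1 + a * cos x := by
  have : |a * cos x| ≤ |a| := by
    rw [abs_mul]
    exact mul_le_of_le_one_right (abs_nonneg a) (abs_cos_le_one x)
  linarith [neg_abs_le (a * cos x)]

lemma one_add_sq_add_two_mul_cos_eq (a x : ℝ) :
    1 + a ^ 2 + 2 * a * cos x = (1 + a * cos x) ^ 2 + (a * sin x) ^ 2 := by
  linear_combination (-a ^ 2) * sin_sq_add_cos_sq x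

lemma one_add_sq_add_two_mul_cos_pos {a x : ℝ} (hv : 1 + a * cos x ≠ 0) :
    0 < 1 + a ^ 2 + 2 * a * cos x := by
  rw [one_add_sq_add_two_mul_cos_eq]
  positivity

lemma hasDerivAt_fiberAngle {a θ : ℝ} (hv : 1 + a * cos (2 * θ) ≠ 0) :
    HasDerivAt (fiberAngle a) ((1 - a ^ 2) / (1 + a ^ 2 + 2 * a * cos (2 * θ))) θ := by
  have hlin : HasDerivAt (fun x : ℝ => 2 * x) 2 θ := by
    simpa using (hasDerivAt_id θ).const_mul (2 : ℝ)
  have hnum : HasDerivAt (fun x => a * sin (2 * x)) (a * (cos (2 * θ) * 2)) θ :=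
    ((hasDerivAt_sin (2 * θ)).comp θ hlin).const_mul a
  have hden : HasDerivAt (fun x => 1 + a * cos (2 * x)) (a * (-sin (2 * θ) * 2)) θ := by
    simpa using (((hasDerivAt_cos (2 * θ)).comp θ hlin).const_mul a).const_add 1
  have hD : (1 + a * cos (2 * θ)) ^ 2 + (a * sin (2 * θ)) ^ 2 ≠ 0 := by positivity
  refine ((hasDerivAt_id θ).sub (hnum.div hden hv).arctan).congr_deriv ?_
  rw [Pi.div_apply, one_add_sq_add_two_mul_cos_eq]
  field_simp
  linear_combination (-a ^ 2) * sin_sq_add_cos_sq (2 * θ)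

lemma sqrt_one_add_sq_div_eq {a x : ℝ} (hv : 0 < 1 + a * cos x) :
    √(1 + (a * sin x / (1 + a * cos x)) ^ 2) = √(1 + a ^ 2 + 2 * a * cos x) / (1 + a * cos x) := by
  have h : 1 + (a * sin x / (1 + a * cos x)) ^ 2 = (1 + a ^ 2 + 2 * a * cos x) / (1 + a * cos x) ^ 2 := by
    rw [one_add_sq_add_two_mul_cos_eq]
    field_simp
  rw [h, sqrt_div' _ (sq_nonneg _), sqrt_sq hv.le]

lemma sin_fiberAngle {a θ : ℝ} (hv : 0 < 1 + a * cos (2 * θ)) :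
    sin (fiberAngle a θ) = (1 - a) * sin θ / √(1 + a ^ 2 + 2 * a * cos (2 * θ)) := by
  rw [fiberAngle, sin_sub, sin_arctan, cos_arctan, sqrt_one_add_sq_div_eq hv]
  field_simp
  rw [sin_two_mul, cos_two_mul]
  ring

lemma sin_fiberAngle_sq {a θ : ℝ} (hv : 0 < 1 + a * cos (2 * θ)) :
    sin (fiberAngle a θ) ^ 2 = (1 - a) ^ 2 * sin θ ^ 2 / (1 + a ^ 2 + 2 * a * cos (2 * θ)) := by
  rw [sin_fiberAngle hv, div_pow, mul_pow, sq_sqrt (one_add_sq_add_two_mul_cos_pos hv.ne').le]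

lemma sign_sin_fiberAngle {a θ : ℝ} (ha : a < 1) (hv : 0 < 1 + a * cos (2 * θ)) :
    Real.sign (sin (fiberAngle a θ)) = Real.sign (sin θ) := by
  have hD := sqrt_pos.mpr (one_add_sq_add_two_mul_cos_pos hv.ne')
  rw [sin_fiberAngle hv, mul_div_right_comm]
  exact sign_mul_of_pos (div_pos (sub_pos.mpr ha) hD) _

end FiberChange

end

open FiberChange in
/-- For `κ ∈ (-1,1)`, `ρ ∈ [0,1]` and the fiber change of variable
`θ'(θ) = θ - arctan(κρ² sin(2θ)/(1 + κρ² cos(2θ)))`, one has for every `θ`: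
the denominator `(1+κρ²)² - 4κρ² sin²θ` is positive, `θ'` is differentiable at `θ` with
derivative `(1 - κ²ρ⁴)/((1+κρ²)² - 4κρ² sin²θ)`,
`sin²(θ'(θ)) = (1-κρ²)² sin²θ/((1+κρ²)² - 4κρ² sin²θ)`, and `sin(θ'(θ))` has the same
sign as `sin θ`. -/
theorem fiber_change_of_variable (κ : ℝ) (hκ : κ ∈ Set.Ioo (-1 : ℝ) 1)
    (ρ : ℝ) (hρ : ρ ∈ Set.Icc (0 : ℝ) 1) (θ : ℝ) :
    0 < (1 + κ * ρ ^ 2) ^ 2 - 4 * κ * ρ ^ 2 * Real.sin θ ^ 2 ∧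
    HasDerivAt
      (fun x : ℝ => x - Real.arctan (κ * ρ ^ 2 * Real.sin (2 * x) / (1 + κ * ρ ^ 2 * Real.cos (2 * x))))
      ((1 - κ ^ 2 * ρ ^ 4) / ((1 + κ * ρ ^ 2) ^ 2 - 4 * κ * ρ ^ 2 * Real.sin θ ^ 2)) θ ∧
    Real.sin (θ - Real.arctan (κ * ρ ^ 2 * Real.sin (2 * θ) / (1 + κ * ρ ^ 2 * Real.cos (2 * θ)))) ^ 2 =
      (1 - κ * ρ ^ 2) ^ 2 * Real.sin θ ^ 2 /
        ((1 + κ * ρ ^ 2) ^ 2 - 4 * κ * ρ ^ 2 * Real.sin θ ^ 2) ∧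
    Real.sign
        (Real.sin (θ - Real.arctan (κ * ρ ^ 2 * Real.sin (2 * θ) / (1 + κ * ρ ^ 2 * Real.cos (2 * θ))))) =
      Real.sign (Real.sin θ) := by
  obtain ⟨hκ₁, hκ₂⟩ := hκ
  obtain ⟨hρ₀, hρ₁⟩ := hρ
  have ha : |κ * ρ ^ 2| < 1 := by
    rw [abs_mul, abs_of_nonneg (sq_nonneg ρ)]
    exact lt_of_le_of_lt (mul_le_of_le_one_right (abs_nonneg κ) (pow_le_one₀ hρ₀ hρ₁))
      (abs_lt.mpr ⟨hκ₁, hκ₂⟩)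
  have hv := one_add_mul_cos_pos ha (2 * θ)
  rw [show κ ^ 2 * ρ ^ 4 = (κ * ρ ^ 2) ^ 2 by ring, show 4 * κ * ρ ^ 2 = 4 * (κ * ρ ^ 2) by ring,
    sq_one_add_sub_four_mul_sin_sq]
  exact ⟨one_add_sq_add_two_mul_cos_pos hv.ne', hasDerivAt_fiberAngle hv.ne',
    sin_fiberAngle_sq hv, sign_sin_fiberAngle (abs_lt.mp ha).2 hv⟩
end
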